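/- Let S be a supercharacter theory of a finite group G and let M, N be S-normal subgroups. Then M ≤ N if and only if Irr(S | M) ⊆ Irr(S | N). -/

import Mathlib

open scoped BigOperators Pointwise

/-- `f : G → ℂ` is an irreducible character of `G`. -/
def IsIrrChar (G : Type) [Group G] [Fintype G] (f : G → ℂ) : Prop :=
  ∃ V : FDRep ℂ G, CategoryTheory.Simple V ∧ V.character = f

/-- A supercharacter theory of a finite group `G` (Diaconis–Isaacs): a partition
`parts` of the set of irreducible characters of `G` together with a partition of `G`
into `S`-classes (`cls g` is the class of `g`), such that `{1}` is a class, the number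
of parts equals the number of classes, and each supercharacter
`σ_X = ∑ χ ∈ X, χ(1)·χ` is constant on every class. -/
structure SCT (G : Type) [Group G] [Fintype G] where
  parts : Finset (Finset (G → ℂ))
  cls : G → Set G
  parts_cover : ∀ f : G → ℂ, IsIrrChar G f ↔ ∃ X ∈ parts, f ∈ X
  parts_disj : ∀ X ∈ parts, ∀ Y ∈ parts, X ≠ Y → Disjoint X Y
  parts_nonempty : ∀ X ∈ parts, X.Nonempty
  mem_cls : ∀ g : G, g ∈ cls g
  cls_eq : ∀ g h : G, h ∈ cls g → cls h = cls g
  cls_one : cls (1 : G) = {1}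
  card_eq : parts.card = Nat.card (Set.range cls)
  const : ∀ X ∈ parts, ∀ g h : G, h ∈ cls g →
    (∑ χ ∈ X, χ 1 * χ h) = (∑ χ ∈ X, χ 1 * χ g)

variable {G : Type} [Group G] [Fintype G]

namespace SCT

/-- The supercharacter attached to a part `X`. -/
noncomputable def superchar (_S : SCT G) (X : Finset (G → ℂ)) : G → ℂ := fun g => ∑ χ ∈ X, χ 1 * χ g

/-- The set `Irr(S)` of `S`-characters. -/
def Irr (S : SCT G) : Set (G → ℂ) := {f | ∃ X ∈ S.parts, f = S.superchar X}

end SCT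

/-- The kernel of a character-like function `f : G → ℂ`. -/
def charKer (f : G → ℂ) : Subgroup G where
  carrier := {g | ∀ h, f (g * h) = f h}
  one_mem' := by intro h; simp
  mul_mem' := by intro a b ha hb h; rw [mul_assoc, ha, hb]
  inv_mem' := by
    intro a ha h
    have := ha (a⁻¹ * h)
    rw [mul_inv_cancel_left] at this
    exact this.symm

namespace SCT

/-- `[H,S]`, the subgroup generated by the `g⁻¹k` with `g ∈ H`, `k ∈ Cl_S(g)`. -/
def comm (S : SCT G) (H : Subgroup G) : Subgroup G :=
  Subgroup.closure {x | ∃ g ∈ H, ∃ k ∈ S.cls g, x = g⁻¹ * k}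

/-- `[G,S]`. -/
def derived (S : SCT G) : Subgroup G := S.comm ⊤

/-- `Irr(S | N)`: the `S`-characters whose kernel does not contain `N`. -/
def IrrRel (S : SCT G) (N : Subgroup G) : Set (G → ℂ) :=
  {f | f ∈ S.Irr ∧ ¬ N ≤ charKer f}

/-- `g` is an `S`-Camina element: all of `Irr(S | [G,S])` vanishes at `g`. -/
def IsCaminaElt (S : SCT G) (g : G) : Prop :=
  ∀ f ∈ S.IrrRel S.derived, f g = 0

/-- `N` is `S`-normal: a union of `S`-classes. -/
def IsNormal (S : SCT G) (N : Subgroup G) : Prop :=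
  ∀ g ∈ N, S.cls g ⊆ N

/-- `(G,N)` is a generalised `S`-Camina pair. -/
def IsGCP (S : SCT G) (N : Subgroup G) : Prop :=
  S.IsNormal N ∧ ∀ g : G, g ∉ N → S.IsCaminaElt g

/-- The set `Z(S)` of elements with singleton `S`-class. -/
def centerSet (S : SCT G) : Set G := {g | S.cls g = {g}}

/-- The vanishing-off subgroup `V(S | N)`. -/
def V (S : SCT G) (N : Subgroup G) : Subgroup G :=
  Subgroup.closure {g | ∃ f ∈ S.IrrRel N, f g ≠ 0}

/-- `V(S) = V(S | [G,S])`. -/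
def VS (S : SCT G) : Subgroup G := S.V S.derived

/-- `U(S | N)`: the product of all `S`-normal subgroups `H` with `V(S | H) ≤ N`. -/
def U (S : SCT G) (N : Subgroup G) : Subgroup G :=
  ⨆ (H : Subgroup G) (_ : S.IsNormal H ∧ S.V H ≤ N), H

/-- The upper `S`-central series: `ζ_0 = 1` and `ζ_{i+1}/ζ_i = Z(S^{G/ζ_i})`,
i.e. `ζ_{i+1}` consists of the `g` whose `S`-class maps onto the single coset `gζ_i`. -/
def zeta (S : SCT G) : ℕ → Subgroup G
  | 0 => ⊥
  | i + 1 => Subgroup.closure {g | ∀ k ∈ S.cls g, g⁻¹ * k ∈ S.zeta i}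

/-- The lower `S`-central series `γ_1 = G`, `γ_{i+1} = [γ_i, S]` (with `γ_0 := G`). -/
def gamma (S : SCT G) : ℕ → Subgroup G
  | 0 => ⊤
  | 1 => ⊤
  | n + 2 => S.comm (S.gamma (n + 1))

/-- The series `V_1(S) = V(S)`, `V_{i+1}(S) = [V_i(S), S]` (with `V_0 := V(S)`). -/
def Vseq (S : SCT G) : ℕ → Subgroup G
  | 0 => S.VS
  | 1 => S.VS
  | n + 2 => S.comm (S.Vseq (n + 1))

/-- `G` is a `VZ(S)`-group: every member of `Irr(S | [G,S])` vanishes off `Z(S)`. -/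
def IsVZ (S : SCT G) : Prop :=
  ∀ f ∈ S.IrrRel S.derived, ∀ g : G, g ∉ S.centerSet → f g = 0

end SCT

/-! For the converse, an `S`-normal subgroup `N` is the intersection of the kernels of the
`S`-characters whose kernel contains it. The supercharacters are orthogonal, hence linearly
independent, and there are as many of them as `S`-classes, so they span the functions constant
on `S`-classes; in particular `1_N = ∑ a_X σ_X`, and `N` is normal. Pairing with an
irreducible `χ ∈ X` gives `∑_{n ∈ N} χ(n) = a_X |G| χ(1)`, so by Schur's lemma `a_X ≠ 0` forces
`N ≤ ker χ`. Hence `1_N(g) = 1_N(1) = 1` whenever `g` lies in the kernel of every `σ_X` with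
`a_X ≠ 0`. -/

open CategoryTheory Module
open scoped Classical ComplexOrder

/-- `|G|` times the usual inner product of class functions when `f'` is a character. -/
noncomputable def charPairing : (G → ℂ) →ₗ[ℂ] (G → ℂ) →ₗ[ℂ] ℂ :=
  LinearMap.mk₂ ℂ (fun f f' => ∑ g, f g * f' g⁻¹)
    (fun _ _ _ => by simp only [Pi.add_apply, add_mul, Finset.sum_add_distrib])
    (fun _ _ _ => by simp only [Pi.smul_apply, smul_eq_mul, mul_assoc, Finset.mul_sum])
    (fun _ _ _ => by simp only [Pi.add_apply, mul_add, Finset.sum_add_distrib])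
    (fun _ _ _ => by simp only [Pi.smul_apply, smul_eq_mul, mul_left_comm, Finset.mul_sum])

theorem charPairing_apply (f f' : G → ℂ) : charPairing f f' = ∑ g, f g * f' g⁻¹ := rfl

theorem charPairing_indicator (f : G → ℂ) (N : Subgroup G) :
    charPairing f ((N : Set G).indicator 1) = ∑ n : N, f n := by
  simp only [charPairing_apply, Set.indicator_apply, SetLike.mem_coe, inv_mem_iff, Pi.one_apply,
    mul_ite, mul_one, mul_zero]
  rw [← Finset.sum_filter]
  exact Finset.sum_subtype _ (by simp) f

namespace FDRep

theorem sum_character_mul_character_inv (V : FDRep ℂ G) [Simple V] (W : FDRep ℂ G)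
    [Simple W] :
    ∑ g : G, V.character g * W.character g⁻¹ =
      if Nonempty (V ≅ W) then (Fintype.card G : ℂ) else 0 := by
  have h := FDRep.char_orthonormal V W
  rw [inv_mul_eq_iff_eq_mul₀ (Nat.cast_ne_zero.mpr Nat.card_pos.ne')] at h
  rw [h, Nat.card_eq_fintype_card]
  split_ifs <;> simp

theorem exists_eq_smul_id_of_commute {H : Type} [Monoid H] (V : FDRep ℂ H) [Simple V]
    (φ : V →ₗ[ℂ] V) (hφ : ∀ h, φ * V.ρ h = V.ρ h * φ) : ∃ c : ℂ, φ = c • 1 := by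
  let Φ : V ⟶ V := ⟨InducedCategory.homMk (ModuleCat.ofHom φ), fun g => by
    ext v; exact LinearMap.congr_fun (hφ g) v⟩
  obtain ⟨c, hc⟩ := endomorphism_simple_eq_smul_id ℂ Φ
  exact ⟨c, LinearMap.ext fun v => (congrArg (fun f : V ⟶ V => f.hom.hom.hom v) hc).symm⟩

variable (V : FDRep ℂ G) (N : Subgroup G)

theorem ρ_mul_sum_subgroup (n : N) :
    V.ρ (n : G) * ∑ m : N, V.ρ (m : G) = ∑ m : N, V.ρ (m : G) := by
  rw [Finset.mul_sum]
  exact Fintype.sum_equiv (Equiv.mulLeft n) _ _ fun m => (map_mul V.ρ (n : G) m).symm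

theorem sum_subgroup_mul_ρ [N.Normal] (g : G) :
    (∑ m : N, V.ρ (m : G)) * V.ρ g = V.ρ g * ∑ m : N, V.ρ (m : G) := by
  rw [Finset.sum_mul, Finset.mul_sum]
  refine (Fintype.sum_equiv (MulAut.conjNormal g).toEquiv _ _ fun m => ?_).symm
  simp only [MulEquiv.toEquiv_eq_coe, MulEquiv.coe_toEquiv, MulAut.conjNormal_apply, ← map_mul,
    inv_mul_cancel_right]

end FDRep

namespace IsIrrChar

variable {χ ψ : G → ℂ}

theorem charPairing_eq (hχ : IsIrrChar G χ) (hψ : IsIrrChar G ψ) :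
    charPairing χ ψ = if χ = ψ then (Fintype.card G : ℂ) else 0 := by
  obtain ⟨V, _, rfl⟩ := hχ
  obtain ⟨W, _, rfl⟩ := hψ
  rw [charPairing_apply, V.sum_character_mul_character_inv W]
  by_cases h : V.character = W.character
  · have hVW : Nonempty (V ≅ W) := by
      by_contra hVW
      have hsum := V.sum_character_mul_character_inv W
      rw [if_neg hVW, h, W.sum_character_mul_character_inv W, if_pos ⟨Iso.refl W⟩] at hsum
      exact Nat.cast_ne_zero.mpr Fintype.card_ne_zero hsum
    rw [if_pos h, if_pos hVW]
  · rw [if_neg h, if_neg fun ⟨i⟩ => h (FDRep.char_iso i)]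

theorem apply_one_pos (hχ : IsIrrChar G χ) : 0 < χ 1 := by
  obtain ⟨V, _, rfl⟩ := hχ
  have : Nontrivial V := by
    refine not_subsingleton_iff_nontrivial.mp fun _ => id_nonzero V ?_
    ext v
    exact Subsingleton.elim _ _
  rw [FDRep.char_one]
  exact_mod_cast Module.finrank_pos

theorem apply_mul_comm (hχ : IsIrrChar G χ) (a b : G) : χ (a * b) = χ (b * a) := by
  obtain ⟨V, _, rfl⟩ := hχ
  exact FDRep.char_mul_comm V b a

/-- The averaging operator `∑ n ∈ N, ρ n` commutes with `G`, so it is a scalar `c` by Schur;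
its trace `∑ n ∈ N, χ n` is `c χ(1)`, so `c ≠ 0`, and `ρ n` fixing it forces `ρ n = 1`. -/
theorem le_charKer_of_sum_ne_zero (hχ : IsIrrChar G χ) (N : Subgroup G) [N.Normal]
    (h : ∑ n : N, χ n ≠ 0) : N ≤ charKer χ := by
  obtain ⟨V, _, rfl⟩ := hχ
  obtain ⟨c, hc⟩ := V.exists_eq_smul_id_of_commute _ (V.sum_subgroup_mul_ρ N)
  have hc0 : c ≠ 0 := by
    rintro rfl
    apply h
    simp only [FDRep.character, ← map_sum, hc, zero_smul, map_zero]
  intro n hn g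
  have hρ : V.ρ n = 1 := by
    have := V.ρ_mul_sum_subgroup N ⟨n, hn⟩
    rw [hc, mul_smul_comm, mul_one] at this
    exact smul_right_injective _ hc0 this
  simp only [FDRep.character, map_mul, hρ, one_mul]

end IsIrrChar

namespace SCT

variable (S : SCT G)

theorem irrRel_monotone : Monotone S.IrrRel :=
  fun _ _ hMN _ hf => ⟨hf.1, fun hN => hf.2 (hMN.trans hN)⟩

theorem isIrrChar_of_mem {X : Finset (G → ℂ)} (hX : X ∈ S.parts) {χ : G → ℂ} (hχ : χ ∈ X) :
    IsIrrChar G χ :=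
  (S.parts_cover χ).mpr ⟨X, hX, hχ⟩

theorem superchar_eq_sum (X : Finset (G → ℂ)) : S.superchar X = ∑ χ ∈ X, χ 1 • χ := by
  ext g
  simp [superchar]

theorem superchar_apply_mul_comm {X : Finset (G → ℂ)} (hX : X ∈ S.parts) (a b : G) :
    S.superchar X (a * b) = S.superchar X (b * a) :=
  Finset.sum_congr rfl fun χ hχ => by rw [(S.isIrrChar_of_mem hX hχ).apply_mul_comm]

theorem charPairing_superchar {χ : G → ℂ} (hχ : IsIrrChar G χ) {Y : Finset (G → ℂ)}
    (hY : Y ∈ S.parts) :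
    charPairing χ (S.superchar Y) = if χ ∈ Y then (Fintype.card G : ℂ) * χ 1 else 0 := by
  rw [superchar_eq_sum, map_sum]
  calc ∑ ψ ∈ Y, charPairing χ (ψ 1 • ψ)
      = ∑ ψ ∈ Y, if χ = ψ then ψ 1 * (Fintype.card G : ℂ) else 0 :=
        Finset.sum_congr rfl fun ψ hψ => by
          rw [map_smul, hχ.charPairing_eq (S.isIrrChar_of_mem hY hψ)]
          split_ifs <;> simp
    _ = _ := by rw [Finset.sum_ite_eq]; split_ifs <;> ring

theorem charPairing_superchar_superchar {X Y : Finset (G → ℂ)} (hX : X ∈ S.parts)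
    (hY : Y ∈ S.parts) :
    charPairing (S.superchar X) (S.superchar Y) =
      if X = Y then (Fintype.card G : ℂ) * ∑ χ ∈ X, χ 1 * χ 1 else 0 := by
  rw [S.superchar_eq_sum X, map_sum, LinearMap.sum_apply]
  split_ifs with hXY
  · subst hXY
    rw [Finset.mul_sum]
    refine Finset.sum_congr rfl fun χ hχ => ?_
    rw [map_smul, LinearMap.smul_apply, S.charPairing_superchar (S.isIrrChar_of_mem hX hχ) hX,
      if_pos hχ, smul_eq_mul]
    ring
  · refine Finset.sum_eq_zero fun χ hχ => ?_
    rw [map_smul, LinearMap.smul_apply, S.charPairing_superchar (S.isIrrChar_of_mem hX hχ) hY,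
      if_neg (Finset.disjoint_left.mp (S.parts_disj X hX Y hY hXY) hχ), smul_zero]

theorem sum_apply_one_mul_self_pos {X : Finset (G → ℂ)} (hX : X ∈ S.parts) :
    0 < ∑ χ ∈ X, χ 1 * χ 1 :=
  Finset.sum_pos (fun _ hχ => mul_pos (S.isIrrChar_of_mem hX hχ).apply_one_pos
    (S.isIrrChar_of_mem hX hχ).apply_one_pos) (S.parts_nonempty X hX)

theorem linearIndependent_superchar : LinearIndependent ℂ fun X : S.parts => S.superchar X := by
  rw [Fintype.linearIndependent_iff]
  intro a ha Y
  have h := congrArg (fun f => charPairing f (S.superchar Y)) ha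
  simp only [map_sum, map_smul, LinearMap.sum_apply, LinearMap.smul_apply,
    map_zero, LinearMap.zero_apply] at h
  rw [Finset.sum_eq_single Y (fun X _ hXY => by
      rw [S.charPairing_superchar_superchar X.2 Y.2, if_neg (Subtype.coe_injective.ne hXY),
        smul_zero]) (by simp),
    S.charPairing_superchar_superchar Y.2 Y.2, if_pos rfl, smul_eq_mul] at h
  exact (mul_eq_zero.mp h).resolve_right <|
    mul_ne_zero (Nat.cast_ne_zero.mpr Fintype.card_ne_zero) (S.sum_apply_one_mul_self_pos Y.2).ne'

/-- The functions constant on `S`-classes, as those factoring through `g ↦ S.cls g`. -/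
noncomputable def classFunctions : Submodule ℂ (G → ℂ) :=
  LinearMap.range (LinearMap.funLeft ℂ ℂ (Set.rangeFactorization S.cls))

theorem mem_classFunctions {f : G → ℂ} :
    f ∈ S.classFunctions ↔ ∀ g h, h ∈ S.cls g → f h = f g := by
  constructor
  · rintro ⟨F, rfl⟩ g h hh
    simp only [LinearMap.funLeft_apply, Set.rangeFactorization, S.cls_eq g h hh]
  · intro hf
    refine ⟨f ∘ Function.surjInv Set.rangeFactorization_surjective, funext fun g => ?_⟩
    have hcls : S.cls (Function.surjInv _ (Set.rangeFactorization S.cls g)) = S.cls g :=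
      congrArg Subtype.val (Function.surjInv_eq Set.rangeFactorization_surjective _)
    exact (hf _ g (by rw [hcls]; exact S.mem_cls g)).symm

theorem finrank_classFunctions_le : finrank ℂ S.classFunctions ≤ S.parts.card := by
  have := Fintype.ofFinite (Set.range S.cls)
  calc finrank ℂ S.classFunctions ≤ finrank ℂ (Set.range S.cls → ℂ) :=
        LinearMap.finrank_range_le _
    _ = S.parts.card := by
        rw [Module.finrank_fintype_fun_eq_card, ← Nat.card_eq_fintype_card, S.card_eq]

theorem span_superchar_eq_classFunctions :
    Submodule.span ℂ (Set.range fun X : S.parts => S.superchar X) = S.classFunctions := by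
  refine Submodule.eq_of_le_of_finrank_le (Submodule.span_le.mpr ?_) ?_
  · rintro - ⟨X, rfl⟩
    exact S.mem_classFunctions.mpr fun g h => S.const X X.2 g h
  · rw [finrank_span_eq_card S.linearIndependent_superchar, Fintype.card_coe]
    exact S.finrank_classFunctions_le

variable {S} {N : Subgroup G}

theorem IsNormal.mem_iff_of_mem_cls (hN : S.IsNormal N) {g h : G} (hh : h ∈ S.cls g) :
    h ∈ N ↔ g ∈ N :=
  ⟨fun hhN => hN h hhN (S.cls_eq g h hh ▸ S.mem_cls g), fun hgN => hN g hgN hh⟩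

theorem IsNormal.exists_sum_superchar_eq_indicator (hN : S.IsNormal N) :
    ∃ a : S.parts → ℂ, ∑ X, a X • S.superchar X = (N : Set G).indicator 1 := by
  refine (Submodule.mem_span_range_iff_exists_fun ℂ).mp ?_
  rw [span_superchar_eq_classFunctions, mem_classFunctions]
  intro g h hh
  simp only [Set.indicator_apply, SetLike.mem_coe, hN.mem_iff_of_mem_cls hh, Pi.one_apply]

theorem IsNormal.normal (hN : S.IsNormal N) : N.Normal := by
  obtain ⟨a, ha⟩ := hN.exists_sum_superchar_eq_indicator
  have hcomm (x y : G) : (N : Set G).indicator (1 : G → ℂ) (x * y) =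
      (N : Set G).indicator 1 (y * x) := by
    simp only [← ha, Finset.sum_apply, Pi.smul_apply, smul_eq_mul]
    exact Finset.sum_congr rfl fun X _ => by rw [S.superchar_apply_mul_comm X.2]
  refine ⟨fun n hn g => by_contra fun hgn => ?_⟩
  have := hcomm g (n * g⁻¹)
  rw [← mul_assoc, inv_mul_cancel_right, Set.indicator_of_notMem hgn,
    Set.indicator_of_mem hn] at this
  exact zero_ne_one this

theorem sum_subgroup_apply_eq_coeff_mul {a : S.parts → ℂ}
    (ha : ∑ X, a X • S.superchar X = (N : Set G).indicator 1) {X : S.parts} {χ : G → ℂ}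
    (hχ : χ ∈ (X : Finset (G → ℂ))) :
    ∑ n : N, χ n = a X * ((Fintype.card G : ℂ) * χ 1) := by
  have hirr := S.isIrrChar_of_mem X.2 hχ
  rw [← charPairing_indicator, ← ha, map_sum, Finset.sum_eq_single X]
  · rw [map_smul, S.charPairing_superchar hirr X.2, if_pos hχ, smul_eq_mul]
  · intro Y _ hYX
    rw [map_smul, S.charPairing_superchar hirr Y.2, if_neg, smul_zero]
    exact Finset.disjoint_right.mp (S.parts_disj Y Y.2 X X.2 (Subtype.coe_injective.ne hYX)) hχ
  · simp

theorem IsNormal.le_charKer_superchar (hN : S.IsNormal N) {a : S.parts → ℂ}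
    (ha : ∑ X, a X • S.superchar X = (N : Set G).indicator 1) {X : S.parts} (haX : a X ≠ 0) :
    N ≤ charKer (S.superchar X) := by
  have := hN.normal
  intro n hn g
  refine Finset.sum_congr rfl fun χ hχ => ?_
  have hirr := S.isIrrChar_of_mem X.2 hχ
  have hsum : ∑ m : N, χ m ≠ 0 := by
    rw [sum_subgroup_apply_eq_coeff_mul ha hχ]
    exact mul_ne_zero haX (mul_ne_zero (Nat.cast_ne_zero.mpr Fintype.card_ne_zero)
      hirr.apply_one_pos.ne')
  rw [hirr.le_charKer_of_sum_ne_zero N hsum hn g]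

theorem IsNormal.iInf_charKer_eq (hN : S.IsNormal N) :
    ⨅ f ∈ S.Irr \ S.IrrRel N, charKer f = N := by
  refine le_antisymm (fun g hg => by_contra fun hgN => ?_)
    (le_iInf₂ fun f hf => not_not.mp fun h => hf.2 ⟨hf.1, h⟩)
  simp only [Subgroup.mem_iInf] at hg
  obtain ⟨a, ha⟩ := hN.exists_sum_superchar_eq_indicator
  have hind : (N : Set G).indicator 1 g = (N : Set G).indicator (1 : G → ℂ) 1 := by
    rw [← ha, Finset.sum_apply, Finset.sum_apply]
    refine Finset.sum_congr rfl fun X _ => ?_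
    rcases eq_or_ne (a X) 0 with haX | haX
    · simp [haX]
    · have hker := hg (S.superchar X)
        ⟨⟨X, X.2, rfl⟩, fun h => h.2 (hN.le_charKer_superchar ha haX)⟩
      simp only [Pi.smul_apply, smul_eq_mul, ← hker 1, mul_one]
  simp [Set.indicator_of_notMem hgN, N.one_mem] at hind

end SCT

theorem le_iff_irrRel_subset_general (S : SCT G) (M N : Subgroup G)
    (hN : S.IsNormal N) :
    M ≤ N ↔ S.IrrRel M ⊆ S.IrrRel N := by
  refine ⟨fun h => S.irrRel_monotone h, fun hsub => ?_⟩
  rw [← hN.iInf_charKer_eq]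
  exact le_iInf₂ fun f hf => not_not.mp fun hM => hf.2 (hsub ⟨hf.1, hM⟩)

/-- for `S`-normal `M`, `N`: `M ≤ N ↔ Irr(S|M) ⊆ Irr(S|N)`. -/
theorem le_iff_irrRel_subset (S : SCT G) (M N : Subgroup G)
    (hM : S.IsNormal M) (hN : S.IsNormal N) :
    M ≤ N ↔ S.IrrRel M ⊆ S.IrrRel N :=
  le_iff_irrRel_subset_general S M N hN
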